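/- Let (Ω, F, P) be a probability space with a filtration (G_m)_{m≥0}, E_m f := E(f|G_m). Let f be nonnegative bounded measurable, m a nonnegative integer, and m₁,…,m_n nonnegative integers. Let N be the number of indices i with m_i < m. Then E_m( f · ∏_{i=1}^n E_{m_i} f ) ≥ ( ∏_{i: m_i < m} E_{m_i} f ) · (E_m f)^{n+1−N} almost surely. -/

import Mathlib

/-!
Split the product into the factors with `mᵢ < m`, which are `G_m`-measurable and pull out of
`E_m`, and the remaining ones, whose indices are `≥ m`. For those, induct on their number, peeling
off the factor `E_k f` with the smallest index `k`: it pulls out of `E_k`, and the induction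
hypothesis at level `k` gives `E_k(f · rest) ≥ (E_k f)^p`, so `E_k` of the whole integrand is at
least `(E_k f)^(p+1)`. The tower property and the conditional Jensen inequality for `x ↦ x^(p+1)`
then give `E_m(…) ≥ E_m((E_k f)^(p+1)) ≥ (E_m f)^(p+1)`.
-/

open MeasureTheory Filter Finset
open scoped ENNReal

namespace MeasureTheory

variable {Ω : Type*} {m0 : MeasurableSpace Ω} {μ : Measure Ω}

lemma MemLp.pow_top {g : Ω → ℝ} (hg : MemLp g ∞ μ) (k : ℕ) : MemLp (g ^ k) ∞ μ := by
  induction k with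
  | zero => simpa [Pi.one_def] using memLp_top_const (μ := μ) (1 : ℝ)
  | succ k ih => rw [pow_succ]; exact hg.mul ih

lemma pow_condExp_le_condExp_pow {m : MeasurableSpace Ω} (hm : m ≤ m0) [SigmaFinite (μ.trim hm)]
    {g : Ω → ℝ} (hg0 : 0 ≤ᵐ[μ] g) (hg : Integrable g μ) {k : ℕ} (hgk : Integrable (g ^ k) μ) :
    (μ[g|m]) ^ k ≤ᵐ[μ] μ[g ^ k|m] :=
  (convexOn_pow k).map_condExp_le (φ := (· ^ k)) hm
    ((continuous_pow k).lowerSemicontinuous.lowerSemicontinuousOn _) hg0 isClosed_Ici hg hgk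

lemma mul_le_condExp_mul_of_stronglyMeasurable_left {m : MeasurableSpace Ω} {g G a : Ω → ℝ}
    (hg : StronglyMeasurable[m] g) (hg0 : 0 ≤ᵐ[μ] g) (hgG : Integrable (g * G) μ)
    (hG : Integrable G μ) (ha : a ≤ᵐ[μ] μ[G|m]) : g * a ≤ᵐ[μ] μ[g * G|m] := by
  filter_upwards [condExp_mul_of_stronglyMeasurable_left hg hgG hG, hg0, ha] with ω hpull hω hle
  rw [hpull]
  exact mul_le_mul_of_nonneg_left hle hω

section Filtration

variable {ι κ : Type*} [LinearOrder κ] {𝒢 : Filtration κ m0} {f : Ω → ℝ}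

lemma MemLp.mul_prod_condExp_top (hf : MemLp f ∞ μ) (ms : ι → κ) (s : Finset ι) :
    MemLp (f * ∏ i ∈ s, μ[f|𝒢 (ms i)]) ∞ μ := by
  have hprod : MemLp (∏ i ∈ s, μ[f|𝒢 (ms i)]) ∞ μ := by
    simpa using MemLp.prod fun i (_ : i ∈ s) => hf.condExp (m := 𝒢 (ms i)) le_top
  exact hprod.mul hf

theorem condExp_pow_le_condExp_mul_prod_condExp [IsFiniteMeasure μ] (hf0 : 0 ≤ᵐ[μ] f)
    (hf : MemLp f ∞ μ) (ms : ι → κ) (s : Finset ι) {m : κ} (hs : ∀ i ∈ s, m ≤ ms i) :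
    (μ[f|𝒢 m]) ^ (#s + 1) ≤ᵐ[μ] μ[f * ∏ i ∈ s, μ[f|𝒢 (ms i)]|𝒢 m] := by
  classical
  induction s using Finset.induction_on_min_value ms generalizing m with
  | empty => simpa using EventuallyLE.refl _ _
  | insert a s ha hmin ih =>
    set k := ms a
    set q := μ[f|𝒢 k]
    set G := f * ∏ i ∈ s, μ[f|𝒢 (ms i)]
    have hsplit : f * ∏ i ∈ insert a s, μ[f|𝒢 (ms i)] = q * G := by
      rw [prod_insert ha]; ring
    have hq0 : 0 ≤ᵐ[μ] q := condExp_nonneg hf0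
    have hmk : m ≤ k := hs a (mem_insert_self a s)
    have hinner : q ^ (#(insert a s) + 1) ≤ᵐ[μ] μ[q * G|𝒢 k] := by
      rw [card_insert_of_notMem ha, pow_succ']
      refine mul_le_condExp_mul_of_stronglyMeasurable_left stronglyMeasurable_condExp hq0 ?_
        ((hf.mul_prod_condExp_top ms s).integrable le_top) (ih hmin)
      rw [← hsplit]
      exact (hf.mul_prod_condExp_top ms _).integrable le_top
    have hqk : Integrable (q ^ (#(insert a s) + 1)) μ :=
      ((hf.condExp le_top).pow_top _).integrable le_top
    calc (μ[f|𝒢 m]) ^ (#(insert a s) + 1)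
        =ᵐ[μ] (μ[q|𝒢 m]) ^ (#(insert a s) + 1) :=
          (condExp_condExp_of_le (𝒢.mono hmk) (𝒢.le k)).symm.pow_const _
      _ ≤ᵐ[μ] μ[q ^ (#(insert a s) + 1)|𝒢 m] :=
          pow_condExp_le_condExp_pow (𝒢.le m) hq0 integrable_condExp hqk
      _ ≤ᵐ[μ] μ[μ[q * G|𝒢 k]|𝒢 m] := condExp_mono hqk integrable_condExp hinner
      _ =ᵐ[μ] μ[f * ∏ i ∈ insert a s, μ[f|𝒢 (ms i)]|𝒢 m] := by
          rw [hsplit]; exact condExp_condExp_of_le (𝒢.mono hmk) (𝒢.le k)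

theorem prod_condExp_mul_pow_le_condExp_mul_prod_condExp [IsFiniteMeasure μ] (hf0 : 0 ≤ᵐ[μ] f)
    (hf : MemLp f ∞ μ) (ms : ι → κ) (s : Finset ι) (m : κ) :
    (∏ i ∈ s with ms i < m, μ[f|𝒢 (ms i)]) * (μ[f|𝒢 m]) ^ (#{i ∈ s | ¬ ms i < m} + 1)
      ≤ᵐ[μ] μ[f * ∏ i ∈ s, μ[f|𝒢 (ms i)]|𝒢 m] := by
  set P := ∏ i ∈ s with ms i < m, μ[f|𝒢 (ms i)]
  have hsplit : f * ∏ i ∈ s, μ[f|𝒢 (ms i)] =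
      P * (f * ∏ i ∈ s with ¬ ms i < m, μ[f|𝒢 (ms i)]) := by
    rw [← prod_filter_mul_prod_filter_not s (ms · < m)]; ring
  have hP : StronglyMeasurable[𝒢 m] P :=
    Finset.stronglyMeasurable_prod _ fun i hi =>
      stronglyMeasurable_condExp.mono (𝒢.mono (mem_filter.1 hi).2.le)
  have hP0 : 0 ≤ᵐ[μ] P := by
    filter_upwards [(eventually_all_finset _).2 fun i _ => condExp_nonneg (m := 𝒢 (ms i)) hf0]
      with ω hω
    simpa [P, Finset.prod_apply] using prod_nonneg hω
  rw [hsplit]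
  refine mul_le_condExp_mul_of_stronglyMeasurable_left hP hP0 ?_
    ((hf.mul_prod_condExp_top ms _).integrable le_top)
    (condExp_pow_le_condExp_mul_prod_condExp hf0 hf ms _ fun i hi => not_lt.1 (mem_filter.1 hi).2)
  rw [← hsplit]
  exact (hf.mul_prod_condExp_top ms s).integrable le_top

end Filtration

end MeasureTheory

/-- For a filtration `(G_m)`, nonnegative bounded measurable `f`, and arbitrary
indices `m, m₁, …, m_n`, with `N` the number of indices `i` with `m_i < m`:
`E_m( f · ∏ᵢ E_{mᵢ} f ) ≥ ( ∏_{i : mᵢ < m} E_{mᵢ} f ) · (E_m f)^{n+1−N}` a.s. -/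
theorem condexp_product_lower_bound_mixed {Ω : Type*} {m0 : MeasurableSpace Ω}
    (μ : Measure Ω) [IsProbabilityMeasure μ] (𝒢 : Filtration ℕ m0)
    (f : Ω → ℝ) (hmeas : Measurable f) (hnonneg : ∀ ω, 0 ≤ f ω)
    (hbdd : ∃ C : ℝ, ∀ ω, f ω ≤ C)
    (n : ℕ) (m : ℕ) (ms : Fin n → ℕ)
    (N : ℕ) (hN : N = (Finset.univ.filter fun i : Fin n => ms i < m).card) :
    ∀ᵐ ω ∂μ,
      (∏ i ∈ Finset.univ.filter fun i : Fin n => ms i < m, (μ[f|𝒢 (ms i)]) ω) *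
          (μ[f|𝒢 m]) ω ^ (n + 1 - N) ≤
        (μ[fun ω' => f ω' * ∏ i : Fin n, (μ[f|𝒢 (ms i)]) ω' | 𝒢 m]) ω := by
  obtain ⟨C, hC⟩ := hbdd
  have hf : MemLp f ∞ μ := memLp_top_of_bound hmeas.aestronglyMeasurable C
    (ae_of_all _ fun ω => (Real.norm_of_nonneg (hnonneg ω)).trans_le (hC ω))
  have hexp : n + 1 - N = #{i | ¬ ms i < m} + 1 := by
    have := card_filter_add_card_filter_not (s := univ) (fun i : Fin n => ms i < m)
    rw [card_univ, Fintype.card_fin] at this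
    omega
  have hprod : (fun ω' => f ω' * ∏ i, μ[f|𝒢 (ms i)] ω') = f * ∏ i, μ[f|𝒢 (ms i)] := by
    ext ω; simp only [Pi.mul_apply, prod_apply]
  rw [hexp, hprod]
  filter_upwards [prod_condExp_mul_pow_le_condExp_mul_prod_condExp (𝒢 := 𝒢)
    (ae_of_all _ hnonneg) hf ms univ m] with ω hω
  simpa only [Pi.mul_apply, Pi.pow_apply, prod_apply] using hω
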